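/- Let B : Ω → Set X be a random set whose range is a finite chain under inclusion, p ∈ (0,1), and let b_p be the ⊆-smallest set in the range with P(B ⊆ b_p) ≥ p (which exists). Then every x ∈ b_p has occupancy O(x) = P(x ∈ B) > 1 − p; in particular b_p ⊆ Q(1 − p). -/

import Mathlib

open MeasureTheory
open scoped ENNReal

/-!
Write `b_p = B ωₚ`. Since the range of `B` is a chain, `x ∈ b_p` can fail to lie in `B ω`
only when `B ω ⊊ b_p`. By finiteness the sets of the range strictly below `b_p`, if any, have a
largest element `b'`, so `{x ∉ B} ⊆ {B ⊆ b'}`; minimality of `b_p` forces `P(B ⊆ b') < p`.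
Hence `P(x ∉ B) < p`, and `P(x ∈ B) > 1 - p` by subadditivity.
-/

theorem IsChain.exists_isGreatest_of_finite {α : Type*} [PartialOrder α] {s : Set α}
    (hc : IsChain (· ≤ ·) s) (hfin : s.Finite) (hne : s.Nonempty) : ∃ a, IsGreatest s a := by
  obtain ⟨a, ha⟩ := hfin.exists_maximal hne
  refine ⟨a, ha.prop, fun b hb => ?_⟩
  rcases hc.total hb ha.prop with hba | hab
  · exact hba
  · exact ha.2 hb hab

theorem measure_setOf_lt_lt_of_forall_le {Ω α : Type*} [MeasurableSpace Ω] [PartialOrder α]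
    (μ : Measure Ω) {f : Ω → α} (hfin : (Set.range f).Finite)
    (hchain : IsChain (· ≤ ·) (Set.range f)) {p : ℝ≥0∞} (hp : 0 < p) {b : α}
    (hb : ∀ c ∈ Set.range f, p ≤ μ {ω | f ω ≤ c} → b ≤ c) :
    μ {ω | f ω < b} < p := by
  set below := Set.range f ∩ Set.Iio b
  rcases below.eq_empty_or_nonempty with hempty | hne
  · have : {ω | f ω < b} = ∅ :=
      Set.eq_empty_of_forall_notMem fun ω hω => hempty.subset ⟨Set.mem_range_self ω, hω⟩
    rwa [this, measure_empty]
  obtain ⟨c, ⟨hc_range, hcb⟩, hc_ge⟩ :=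
    (hchain.mono Set.inter_subset_left).exists_isGreatest_of_finite
      (hfin.subset Set.inter_subset_left) hne
  have hsub : {ω | f ω < b} ⊆ {ω | f ω ≤ c} := fun ω hω => hc_ge ⟨Set.mem_range_self ω, hω⟩
  have hc_small : μ {ω | f ω ≤ c} < p :=
    lt_of_not_ge fun hle => (hb c hc_range hle).not_gt hcb
  exact (measure_mono hsub).trans_lt hc_small

theorem one_sub_lt_measure_of_measure_compl_lt {Ω : Type*} [MeasurableSpace Ω]
    {P : Measure Ω} [IsProbabilityMeasure P] {s : Set Ω} {p : ℝ≥0∞} (hp : p ≤ 1)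
    (hs : P sᶜ < p) : 1 - p < P s :=
  ENNReal.sub_lt_of_lt_add hp <| calc
    1 = P Set.univ := measure_univ.symm
    _ ≤ P s + P sᶜ := measure_univ_le_add_compl s
    _ < P s + p := ENNReal.add_lt_add_left (measure_ne_top P s) hs

theorem quantile_box_subset_occupancy_quantile_general
    {Ω X : Type*} [MeasurableSpace Ω] (P : Measure Ω) [IsProbabilityMeasure P]
    (B : Ω → Set X)
    (hfin : (Set.range B).Finite)
    (hchain : ∀ ω₁ ω₂, B ω₁ ⊆ B ω₂ ∨ B ω₂ ⊆ B ω₁)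
    (p : ℝ≥0∞) (hp : p ∈ Set.Ioo (0 : ℝ≥0∞) 1)
    (bp : Set X)
    (hbp_mem : bp ∈ Set.range B)
    (hbp_least : ∀ b ∈ Set.range B, P {ω | B ω ⊆ b} ≥ p → bp ⊆ b) :
    (∀ x ∈ bp, P {ω | x ∈ B ω} > 1 - p) ∧
      bp ⊆ {x | P {ω | x ∈ B ω} > 1 - p} := by
  obtain ⟨ωp, rfl⟩ := hbp_mem
  have hrange_chain : IsChain (· ≤ ·) (Set.range B) := by
    rintro _ ⟨ω₁, rfl⟩ _ ⟨ω₂, rfl⟩ -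
    exact hchain ω₁ ω₂
  have hmiss : ∀ x ∈ B ωp, {ω | x ∈ B ω}ᶜ ⊆ {ω | B ω < B ωp} := by
    intro x hx ω hω
    rcases hchain ω ωp with hle | hge
    · exact hle.lt_of_ne fun heq => hω (show x ∈ B ω from heq ▸ hx)
    · exact absurd (hge hx) hω
  have hoccupancy : ∀ x ∈ B ωp, 1 - p < P {ω | x ∈ B ω} := fun x hx =>
    one_sub_lt_measure_of_measure_compl_lt hp.2.le <| (measure_mono (hmiss x hx)).trans_lt <|
      measure_setOf_lt_lt_of_forall_le P hfin hrange_chain hp.1 hbp_least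
  exact ⟨hoccupancy, hoccupancy⟩

/-- For a random set whose range is a finite chain under inclusion, if `b_p` is
the `⊆`-smallest set in the range with `P(B ⊆ b_p) ≥ p`, then every point of
`b_p` has occupancy greater than `1 - p`; in particular `b_p ⊆ Q(1 - p)`. -/
theorem quantile_box_subset_occupancy_quantile
    {Ω X : Type*} [MeasurableSpace Ω] (P : Measure Ω) [IsProbabilityMeasure P]
    (B : Ω → Set X)
    (hfin : (Set.range B).Finite)
    (hchain : ∀ ω₁ ω₂, B ω₁ ⊆ B ω₂ ∨ B ω₂ ⊆ B ω₁)
    (p : ℝ≥0∞) (hp : p ∈ Set.Ioo (0 : ℝ≥0∞) 1)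
    (bp : Set X)
    (hbp_mem : bp ∈ Set.range B)
    (hbp_conf : P {ω | B ω ⊆ bp} ≥ p)
    (hbp_least : ∀ b ∈ Set.range B, P {ω | B ω ⊆ b} ≥ p → bp ⊆ b) :
    (∀ x ∈ bp, P {ω | x ∈ B ω} > 1 - p) ∧
      bp ⊆ {x | P {ω | x ∈ B ω} > 1 - p} :=
  quantile_box_subset_occupancy_quantile_general P B hfin hchain p hp bp hbp_mem hbp_least
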